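/- arXiv:1804.10079 — 2 statements merged into one kernel-verified Lean document; each statement's English description precedes it below -/
import Mathlib

section
/- Given N ≥ 2 i.i.d. pairs (Q̂⁽ⁱ⁾, Ĵ⁽ⁱ⁾), i ∈ {1,…,N}, of random elements of ℝ^m × ℝ^{m×n} with E[Q̂⁽ⁱ⁾] = Q, E[Ĵ⁽ⁱ⁾] = J, and finite second moments of the products, the covariance matrix of the gradient estimator (1/(N(N−1))) Σ_{1 ≤ i ≠ j ≤ N} (Ĵ⁽ⁱ⁾)ᵀ Q̂⁽ʲ⁾ equals Σ_A²/N + Σ_B²/(N(N−1)), where Σ_A² and Σ_B² are positive semidefinite matrices not depending on N; explicitly, Σ_A² = Var[Jᵀ Q̂ + Ĵᵀ Q] and Σ_B² = (1/2) Var[(Ĵ − J)ᵀ(Q̂′ − Q) + (Ĵ′ − J)ᵀ(Q̂ − Q)], where (Q̂, Ĵ) and (Q̂′, Ĵ′) are two independent copies of the pair. -/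
open MeasureTheory Matrix

instance {m n : ℕ} : MeasurableSpace (Matrix (Fin m) (Fin n) ℝ) :=
  (inferInstance : MeasurableSpace (Fin m → Fin n → ℝ))

/-- Covariance matrix `Var[X] = E[X Xᵀ] − E[X] E[X]ᵀ` of a random vector. -/
noncomputable def vecVar {Ω : Type*} [MeasurableSpace Ω] (μ : Measure Ω) {n : ℕ}
    (X : Ω → Fin n → ℝ) : Matrix (Fin n) (Fin n) ℝ :=
  Matrix.of fun i j => (∫ ω, X ω i * X ω j ∂μ) - (∫ ω, X ω i ∂μ) * (∫ ω, X ω j ∂μ)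

/-!
The estimator is a U-statistic of the i.i.d. pairs `Xᵢ = (Q̂ᵢ, Ĵᵢ)` with kernel
`h(x, y) = x.2ᵀ y.1`. Centering at `(Q, J)` splits the kernel as
`h(x, y) = JᵀQ̂_y + Ĵ_xᵀQ − JᵀQ + (Ĵ_x − J)ᵀ(Q̂_y − Q)`, so summing over `i ≠ j` gives
`U = (1/N) Σᵢ A(Xᵢ) + (1/(2N(N−1))) Σ_{i≠j} B(Xᵢ, Xⱼ) − JᵀQ` with `A(x) = JᵀQ̂_x + Ĵ_xᵀQ` and the
symmetrised kernel `B(x, y) = (Ĵ_x − J)ᵀ(Q̂_y − Q) + (Ĵ_y − J)ᵀ(Q̂_x − Q)`.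
Unbiasedness makes `B` degenerate: `E[B(x, X)] = 0` for every fixed `x`. Hence in
`Cov(A(Xᵢ), B(X_k, X_l))` and in `Cov(B(Xᵢ, Xⱼ), B(X_k, X_l))` with `{k, l} ≠ {i, j}` some index
occurs exactly once, inside `B`, and integrating that independent variable out first gives `0`.
Only the diagonal terms survive: `N` copies of `Var A` and `2N(N−1)` copies of `Var B`, which
gives `Var U = Var A / N + Var B / (2N(N−1))`.
-/

open Finset

section OffDiag

variable {α M : Type*} [AddCommGroup M] (s : Finset α)

lemma Finset.sum_offDiag_swap (f : α × α → M) :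
    ∑ ij ∈ s.offDiag, f ij.swap = ∑ ij ∈ s.offDiag, f ij :=
  Finset.sum_equiv (Equiv.prodComm α α) (by simp; tauto) (fun _ _ => rfl)

lemma Finset.cast_card_offDiag {R : Type*} [Ring R] :
    (#s.offDiag : R) = #s * (#s - 1) := by
  rw [offDiag_card, Nat.cast_sub (Nat.le_mul_self _), Nat.cast_mul, mul_sub, mul_one]

variable [DecidableEq α]

lemma Finset.sum_offDiag_eq_sum_sum_sub (f : α × α → M) :
    ∑ ij ∈ s.offDiag, f ij = ∑ i ∈ s, ∑ j ∈ s, f (i, j) - ∑ i ∈ s, f (i, i) := by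
  rw [eq_sub_iff_add_eq, add_comm, ← Finset.sum_diag s f,
    ← Finset.sum_union (Finset.disjoint_diag_offDiag s), Finset.diag_union_offDiag,
    Finset.sum_product]

lemma Finset.sum_sum_ite_ne (f : α → α → M) :
    ∑ i ∈ s, ∑ j ∈ s, (if i ≠ j then f i j else 0) = ∑ ij ∈ s.offDiag, f ij.1 ij.2 := by
  rw [← Finset.sum_product' (f := fun i j => if i ≠ j then f i j else 0), ← Finset.sum_filter]
  congr 1
  ext
  simp [and_assoc]

end OffDiag

namespace ProbabilityTheory

section VecCov

variable {Ω ι κ : Type*} [MeasurableSpace Ω] {μ : Measure Ω}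

noncomputable def vecCov (μ : Measure Ω) (X : Ω → ι → ℝ) (Y : Ω → κ → ℝ) : Matrix ι κ ℝ :=
  Matrix.of fun p q => cov[fun ω => X ω p, fun ω => Y ω q; μ]

@[simp] lemma vecCov_apply (X : Ω → ι → ℝ) (Y : Ω → κ → ℝ) (p : ι) (q : κ) :
    vecCov μ X Y p q = cov[fun ω => X ω p, fun ω => Y ω q; μ] := rfl

lemma vecCov_comm (X : Ω → ι → ℝ) (Y : Ω → κ → ℝ) : vecCov μ Y X = (vecCov μ X Y)ᵀ := by
  ext p q
  exact covariance_comm _ _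

lemma IdentDistrib.vecCov_eq {Ω' : Type*} [MeasurableSpace Ω'] {ν : Measure Ω'}
    {X : Ω → ι → ℝ} {Y : Ω → κ → ℝ} {X' : Ω' → ι → ℝ} {Y' : Ω' → κ → ℝ}
    (h : IdentDistrib (fun ω => (X ω, Y ω)) (fun ω => (X' ω, Y' ω)) μ ν) :
    vecCov μ X Y = vecCov ν X' Y' := by
  ext p q
  have hp : Measurable fun z : (ι → ℝ) × (κ → ℝ) => z.1 p := by fun_prop
  have hq : Measurable fun z : (ι → ℝ) × (κ → ℝ) => z.2 q := by fun_prop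
  have := covariance_map hp.aestronglyMeasurable hq.aestronglyMeasurable h.aemeasurable_fst
  have := covariance_map (μ := ν) hp.aestronglyMeasurable hq.aestronglyMeasurable h.aemeasurable_snd
  simp_all [h.map_eq, Function.comp_def]

lemma vecCov_smul_left (c : ℝ) (X : Ω → ι → ℝ) (Y : Ω → κ → ℝ) :
    vecCov μ (fun ω => c • X ω) Y = c • vecCov μ X Y := by
  ext p q
  exact covariance_const_mul_left c

lemma vecCov_smul_right (c : ℝ) (X : Ω → ι → ℝ) (Y : Ω → κ → ℝ) :
    vecCov μ X (fun ω => c • Y ω) = c • vecCov μ X Y := by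
  ext p q
  exact covariance_const_mul_right c

variable [Fintype ι] [Fintype κ]

lemma vecVar_eq_vecCov [IsProbabilityMeasure μ] {n : ℕ} {X : Ω → Fin n → ℝ}
    (hX : MemLp X 2 μ) : vecVar μ X = vecCov μ X X := by
  ext p q
  rw [vecCov_apply, covariance_eq_sub (hX.eval p) (hX.eval q)]
  rfl

lemma vecCov_add_left [IsFiniteMeasure μ] {X₁ X₂ : Ω → ι → ℝ} {Y : Ω → κ → ℝ}
    (hX₁ : MemLp X₁ 2 μ) (hX₂ : MemLp X₂ 2 μ) (hY : MemLp Y 2 μ) :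
    vecCov μ (fun ω => X₁ ω + X₂ ω) Y = vecCov μ X₁ Y + vecCov μ X₂ Y := by
  ext p q
  exact covariance_add_left (hX₁.eval p) (hX₂.eval p) (hY.eval q)

lemma vecCov_add_right [IsFiniteMeasure μ] {X : Ω → ι → ℝ} {Y₁ Y₂ : Ω → κ → ℝ}
    (hX : MemLp X 2 μ) (hY₁ : MemLp Y₁ 2 μ) (hY₂ : MemLp Y₂ 2 μ) :
    vecCov μ X (fun ω => Y₁ ω + Y₂ ω) = vecCov μ X Y₁ + vecCov μ X Y₂ := by
  rw [vecCov_comm, vecCov_add_left hY₁ hY₂ hX, Matrix.transpose_add, ← vecCov_comm,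
    ← vecCov_comm]

lemma vecCov_sum_left {α : Type*} [IsFiniteMeasure μ] (s : Finset α) {X : α → Ω → ι → ℝ}
    {Y : Ω → κ → ℝ} (hX : ∀ i ∈ s, MemLp (X i) 2 μ) (hY : MemLp Y 2 μ) :
    vecCov μ (fun ω => ∑ i ∈ s, X i ω) Y = ∑ i ∈ s, vecCov μ (X i) Y := by
  ext p q
  simp only [vecCov_apply, Finset.sum_apply, Matrix.sum_apply]
  exact covariance_fun_sum_left' (fun i hi => (hX i hi).eval p) (hY.eval q)

lemma vecCov_sum_right {α : Type*} [IsFiniteMeasure μ] (s : Finset α) {X : Ω → ι → ℝ}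
    {Y : α → Ω → κ → ℝ} (hX : MemLp X 2 μ) (hY : ∀ i ∈ s, MemLp (Y i) 2 μ) :
    vecCov μ X (fun ω => ∑ i ∈ s, Y i ω) = ∑ i ∈ s, vecCov μ X (Y i) := by
  rw [vecCov_comm, vecCov_sum_left s hY hX, Matrix.transpose_sum]
  simp only [← vecCov_comm]

lemma IndepFun.vecCov_eq_zero {X : Ω → ι → ℝ} {Y : Ω → κ → ℝ} (h : IndepFun X Y μ)
    (hX : MemLp X 2 μ) (hY : MemLp Y 2 μ) : vecCov μ X Y = 0 := by
  ext p q
  exact (h.comp (measurable_pi_apply p) (measurable_pi_apply q)).covariance_eq_zero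
    (hX.eval p) (hY.eval q)

lemma posSemidef_vecCov_self [IsFiniteMeasure μ] {X : Ω → ι → ℝ} (hX : MemLp X 2 μ) :
    (vecCov μ X X).PosSemidef := by
  refine .of_dotProduct_mulVec_nonneg ?_ fun x => ?_
  · rw [Matrix.IsHermitian, Matrix.conjTranspose_eq_transpose_of_trivial, ← vecCov_comm]
  · have hx : ∀ p, MemLp (fun ω => x p * X ω p) 2 μ := fun p => (hX.eval p).const_mul _
    have h : star x ⬝ᵥ (vecCov μ X X *ᵥ x) =
        cov[fun ω => ∑ p, x p * X ω p, fun ω => ∑ p, x p * X ω p; μ] := by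
      rw [covariance_fun_sum_fun_sum hx hx]
      simp only [covariance_const_mul_left, covariance_const_mul_right, dotProduct,
        Matrix.mulVec, star_trivial, vecCov_apply, Finset.mul_sum]
      exact Finset.sum_congr rfl fun p _ => Finset.sum_congr rfl fun q _ => by ring
    rw [h]
    exact integral_nonneg fun ω => mul_self_nonneg _

lemma posSemidef_vecVar [IsProbabilityMeasure μ] {n : ℕ} {X : Ω → Fin n → ℝ}
    (hX : MemLp X 2 μ) : (vecVar μ X).PosSemidef := by
  rw [vecVar_eq_vecCov hX]
  exact posSemidef_vecCov_self hX

lemma vecVar_sub_const [IsProbabilityMeasure μ] {n : ℕ} {X : Ω → Fin n → ℝ} (hX : MemLp X 2 μ)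
    (c : Fin n → ℝ) : vecVar μ (fun ω => X ω - c) = vecVar μ X := by
  have hXc : MemLp (fun ω => X ω - c) 2 μ := hX.sub (memLp_const c)
  rw [vecVar_eq_vecCov hX, vecVar_eq_vecCov hXc]
  ext p q
  simp only [vecCov_apply, Pi.sub_apply]
  rw [covariance_sub_const_left ((hX.eval p).integrable one_le_two),
    covariance_sub_const_right ((hX.eval q).integrable one_le_two)]

end VecCov

section Independence

variable {Ω α β ι : Type*} [MeasurableSpace Ω] [MeasurableSpace α] [MeasurableSpace β]
  {μ : Measure Ω} {X : ι → Ω → α}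

lemma iIndepFun.indepFun_prodMk₃ (hX : iIndepFun X μ) (hmeas : ∀ i, Measurable (X i))
    {i j k l : ι} (hil : i ≠ l) (hjl : j ≠ l) (hkl : k ≠ l) :
    IndepFun (fun ω => (X i ω, X j ω, X k ω)) (X l) μ := by
  classical
  have h := hX.indepFun_finset {i, j, k} {l} (by simp [hil.symm, hjl.symm, hkl.symm]) hmeas
  have hφ : Measurable fun y : ({i, j, k} : Finset ι) → α =>
      (y ⟨i, by simp⟩, y ⟨j, by simp⟩, y ⟨k, by simp⟩) := by fun_prop
  have hψ : Measurable fun z : ({l} : Finset ι) → α => z ⟨l, by simp⟩ := by fun_prop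
  exact h.comp hφ hψ

variable [IsProbabilityMeasure μ]

lemma IndepFun.integral_comp_prodMk_eq_zero {Y : Ω → α} {Z : Ω → β} (h : IndepFun Y Z μ)
    (hY : Measurable Y) (hZ : Measurable Z) {g : α × β → ℝ} (hg : Measurable g)
    (hint : Integrable (fun ω => g (Y ω, Z ω)) μ) (h0 : ∀ y, ∫ ω, g (y, Z ω) ∂μ = 0) :
    ∫ ω, g (Y ω, Z ω) ∂μ = 0 := by
  have hmap := (indepFun_iff_map_prod_eq_prod_map_map hY.aemeasurable hZ.aemeasurable).1 h
  have hint' : Integrable g ((μ.map Y).prod (μ.map Z)) := by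
    rw [← hmap]
    exact (integrable_map_measure hg.aestronglyMeasurable (hY.prodMk hZ).aemeasurable).2 hint
  calc ∫ ω, g (Y ω, Z ω) ∂μ = ∫ w, g w ∂((μ.map Y).prod (μ.map Z)) := by
        rw [← hmap, integral_map (hY.prodMk hZ).aemeasurable hg.aestronglyMeasurable]
    _ = ∫ y, ∫ z, g (y, z) ∂(μ.map Z) ∂(μ.map Y) := integral_prod g hint'
    _ = 0 := by
        refine integral_eq_zero_of_ae (ae_of_all _ fun y => ?_)
        exact (integral_map hZ.aemeasurable
          (hg.comp measurable_prodMk_left).aestronglyMeasurable).trans (h0 y)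

lemma iIndepFun.identDistrib_prodMk (hX : iIndepFun X μ) (hmeas : ∀ i, Measurable (X i))
    (hid : ∀ i j, IdentDistrib (X i) (X j) μ μ) {i j k l : ι} (hij : i ≠ j) (hkl : k ≠ l) :
    IdentDistrib (fun ω => (X i ω, X j ω)) (fun ω => (X k ω, X l ω)) μ μ := by
  refine ⟨((hmeas i).prodMk (hmeas j)).aemeasurable, ((hmeas k).prodMk (hmeas l)).aemeasurable,
    ?_⟩
  rw [(hX.indepFun hij).map_prod_eq_prod_map_map (hmeas i).aemeasurable (hmeas j).aemeasurable,
    (hX.indepFun hkl).map_prod_eq_prod_map_map (hmeas k).aemeasurable (hmeas l).aemeasurable,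
    (hid i k).map_eq, (hid j l).map_eq]

end Independence

section UStatistic

variable {Ω E ι κ κ' : Type*} [MeasurableSpace Ω] [MeasurableSpace E] {μ : Measure Ω}
  [IsProbabilityMeasure μ] {X : ι → Ω → E}

def IsDegenerateKernel (μ : Measure Ω) (X : ι → Ω → E) (s : E → E → κ → ℝ) : Prop :=
  ∀ x l q, ∫ ω, s x (X l ω) q ∂μ = 0

lemma integral_mul_degenerate_eq_zero (hX : iIndepFun X μ) (hmeas : ∀ i, Measurable (X i))
    {F s : E → E → ℝ} (hF : Measurable (Function.uncurry F))
    (hs : Measurable (Function.uncurry s)) {i j k l : ι} (hil : i ≠ l) (hjl : j ≠ l)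
    (hkl : k ≠ l) (hdeg : ∀ x, ∫ ω, s x (X l ω) ∂μ = 0)
    (hint : Integrable (fun ω => F (X i ω) (X j ω) * s (X k ω) (X l ω)) μ) :
    ∫ ω, F (X i ω) (X j ω) * s (X k ω) (X l ω) ∂μ = 0 := by
  refine (hX.indepFun_prodMk₃ hmeas hil hjl hkl).integral_comp_prodMk_eq_zero
    (g := fun w => F w.1.1 w.1.2.1 * s w.1.2.2 w.2) ((hmeas i).prodMk ((hmeas j).prodMk
    (hmeas k))) (hmeas l) ?_ hint fun y => ?_
  · exact (hF.comp (measurable_fst.fst.prodMk measurable_fst.snd.fst)).mul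
      (hs.comp (measurable_fst.snd.snd.prodMk measurable_snd))
  · simp only [integral_const_mul, hdeg, mul_zero]

variable [Fintype κ] [Fintype κ']

lemma vecCov_eq_zero_of_isDegenerateKernel (hX : iIndepFun X μ)
    (hmeas : ∀ i, Measurable (X i)) {F : E → E → κ' → ℝ} {s : E → E → κ → ℝ}
    (hF : Measurable (Function.uncurry F)) (hs : Measurable (Function.uncurry s))
    (hdeg : IsDegenerateKernel μ X s) {i j k l : ι} (hil : i ≠ l) (hjl : j ≠ l) (hkl : k ≠ l)
    (hFL2 : MemLp (fun ω => F (X i ω) (X j ω)) 2 μ)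
    (hsL2 : MemLp (fun ω => s (X k ω) (X l ω)) 2 μ) :
    vecCov μ (fun ω => F (X i ω) (X j ω)) (fun ω => s (X k ω) (X l ω)) = 0 := by
  ext p q
  have hFp : Measurable (Function.uncurry fun x y => F x y p) :=
    (measurable_pi_apply p).comp hF
  have hsq : Measurable (Function.uncurry fun x y => s x y q) :=
    (measurable_pi_apply q).comp hs
  have hmean : ∫ ω, s (X k ω) (X l ω) q ∂μ = 0 := by
    simpa using integral_mul_degenerate_eq_zero hX hmeas (F := fun _ _ => 1) measurable_const
      hsq hkl hkl hkl (hdeg · l q) (by simpa using (hsL2.eval q).integrable one_le_two)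
  rw [vecCov_apply, covariance_eq_sub (hFL2.eval p) (hsL2.eval q)]
  simp only [Pi.mul_apply, Matrix.zero_apply]
  rw [hmean, integral_mul_degenerate_eq_zero hX hmeas hFp hsq hil hjl hkl (hdeg · l q)
    ((hFL2.eval p).integrable_mul (hsL2.eval q)), mul_zero, sub_zero]

variable {a : E → κ → ℝ} {s : E → E → κ → ℝ}

lemma vecCov_comp_degenerate_eq_zero (hX : iIndepFun X μ) (hmeas : ∀ i, Measurable (X i))
    (ha : Measurable a) (hs : Measurable (Function.uncurry s)) (hsymm : ∀ x y, s x y = s y x)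
    (hdeg : IsDegenerateKernel μ X s) (haL2 : ∀ i, MemLp (fun ω => a (X i ω)) 2 μ)
    (hsL2 : ∀ i j, i ≠ j → MemLp (fun ω => s (X i ω) (X j ω)) 2 μ) (i : ι) {k l : ι}
    (hkl : k ≠ l) :
    vecCov μ (fun ω => a (X i ω)) (fun ω => s (X k ω) (X l ω)) = 0 := by
  have hF : Measurable (Function.uncurry fun x (_ : E) => a x) := ha.comp measurable_fst
  rcases eq_or_ne l i with rfl | hli
  · simp_rw [hsymm (X k _)]
    exact vecCov_eq_zero_of_isDegenerateKernel hX hmeas hF hs hdeg hkl.symm hkl.symm hkl.symm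
      (haL2 l) (hsL2 l k hkl.symm)
  · exact vecCov_eq_zero_of_isDegenerateKernel hX hmeas hF hs hdeg hli.symm hli.symm hkl
      (haL2 i) (hsL2 k l hkl)

lemma vecCov_degenerate_eq_zero (hX : iIndepFun X μ) (hmeas : ∀ i, Measurable (X i))
    (hs : Measurable (Function.uncurry s)) (hsymm : ∀ x y, s x y = s y x)
    (hdeg : IsDegenerateKernel μ X s)
    (hsL2 : ∀ i j, i ≠ j → MemLp (fun ω => s (X i ω) (X j ω)) 2 μ) {i j k l : ι}
    (hij : i ≠ j) (hkl : k ≠ l) (h₁ : (k, l) ≠ (i, j)) (h₂ : (k, l) ≠ (j, i)) :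
    vecCov μ (fun ω => s (X i ω) (X j ω)) (fun ω => s (X k ω) (X l ω)) = 0 := by
  -- one of `k, l` lies outside `{i, j}`; by symmetry of `s` it may be taken to be `l`
  by_cases hl : l = i ∨ l = j
  · have hik : i ≠ k := by rintro rfl; rcases hl with rfl | rfl <;> simp_all
    have hjk : j ≠ k := by rintro rfl; rcases hl with rfl | rfl <;> simp_all
    simp_rw [hsymm (X k _)]
    exact vecCov_eq_zero_of_isDegenerateKernel hX hmeas hs hs hdeg hik hjk hkl.symm
      (hsL2 i j hij) (hsL2 l k hkl.symm)
  · rw [not_or] at hl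
    exact vecCov_eq_zero_of_isDegenerateKernel hX hmeas hs hs hdeg (Ne.symm hl.1)
      (Ne.symm hl.2) hkl (hsL2 i j hij) (hsL2 k l hkl)

lemma vecCov_degenerate_degenerate [DecidableEq ι] (hX : iIndepFun X μ)
    (hmeas : ∀ i, Measurable (X i)) (hid : ∀ i j, IdentDistrib (X i) (X j) μ μ)
    (hs : Measurable (Function.uncurry s)) (hsymm : ∀ x y, s x y = s y x)
    (hdeg : IsDegenerateKernel μ X s)
    (hsL2 : ∀ i j, i ≠ j → MemLp (fun ω => s (X i ω) (X j ω)) 2 μ) {i₀ j₀ : ι}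
    (h₀ : i₀ ≠ j₀) {ij kl : ι × ι} (hij : ij.1 ≠ ij.2) (hkl : kl.1 ≠ kl.2) :
    vecCov μ (fun ω => s (X ij.1 ω) (X ij.2 ω)) (fun ω => s (X kl.1 ω) (X kl.2 ω)) =
      (if kl = ij then vecCov μ (fun ω => s (X i₀ ω) (X j₀ ω)) (fun ω => s (X i₀ ω) (X j₀ ω))
        else 0) +
      (if kl = ij.swap then vecCov μ (fun ω => s (X i₀ ω) (X j₀ ω)) (fun ω => s (X i₀ ω) (X j₀ ω))
        else 0) := by
  have hV : ∀ {i j}, i ≠ j → vecCov μ (fun ω => s (X i ω) (X j ω)) (fun ω => s (X i ω) (X j ω)) =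
      vecCov μ (fun ω => s (X i₀ ω) (X j₀ ω)) (fun ω => s (X i₀ ω) (X j₀ ω)) :=
    fun hij => ((hX.identDistrib_prodMk hmeas hid hij h₀).comp (hs.prodMk hs)).vecCov_eq
  obtain ⟨i, j⟩ := ij
  obtain ⟨k, l⟩ := kl
  dsimp only [Prod.swap_prod_mk] at hij hkl ⊢
  have hswap : (i, j) ≠ (j, i) := fun h => hij (Prod.mk.inj h).1
  by_cases h₁ : (k, l) = (i, j)
  · obtain ⟨rfl, rfl⟩ := Prod.mk.inj h₁
    rw [if_pos rfl, if_neg hswap, add_zero, hV hkl]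
  by_cases h₂ : (k, l) = (j, i)
  · obtain ⟨rfl, rfl⟩ := Prod.mk.inj h₂
    rw [if_neg h₁, if_pos rfl, zero_add, ← hV hkl]
    simp_rw [hsymm (X l _)]
  rw [if_neg h₁, if_neg h₂, add_zero]
  exact vecCov_degenerate_eq_zero hX hmeas hs hsymm hdeg hsL2 hij hkl h₁ h₂

variable [Fintype ι]

lemma vecCov_sum_comp (hX : iIndepFun X μ) (hid : ∀ i j, IdentDistrib (X i) (X j) μ μ)
    (ha : Measurable a) (haL2 : ∀ i, MemLp (fun ω => a (X i ω)) 2 μ) (i₀ : ι) :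
    vecCov μ (fun ω => ∑ i, a (X i ω)) (fun ω => ∑ i, a (X i ω)) =
      (Fintype.card ι : ℝ) • vecCov μ (fun ω => a (X i₀ ω)) (fun ω => a (X i₀ ω)) := by
  classical
  have hterm : ∀ i k, vecCov μ (fun ω => a (X i ω)) (fun ω => a (X k ω)) =
      if i = k then vecCov μ (fun ω => a (X i₀ ω)) (fun ω => a (X i₀ ω)) else 0 := by
    intro i k
    split_ifs with hik
    · subst hik
      exact ((hid i i₀).comp (ha.prodMk ha)).vecCov_eq
    · exact ((hX.indepFun hik).comp ha ha).vecCov_eq_zero (haL2 i) (haL2 k)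
  have hsum : MemLp (fun ω => ∑ i, a (X i ω)) 2 μ := memLp_finsetSum _ fun i _ => haL2 i
  rw [vecCov_sum_left (X := fun i ω => a (X i ω)) _ (fun i _ => haL2 i) hsum]
  rw [Finset.sum_congr rfl fun i _ =>
    vecCov_sum_right (Y := fun k ω => a (X k ω)) _ (haL2 i) fun k _ => haL2 k]
  rw [Finset.sum_congr rfl fun i _ => Finset.sum_congr rfl fun k _ => hterm i k]
  simp only [Finset.sum_ite_eq, Finset.mem_univ, if_true, Finset.sum_const,
    Finset.card_univ, Nat.cast_smul_eq_nsmul]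

lemma vecCov_sum_offDiag_degenerate (hX : iIndepFun X μ) (hmeas : ∀ i, Measurable (X i))
    (hid : ∀ i j, IdentDistrib (X i) (X j) μ μ) (hs : Measurable (Function.uncurry s))
    (hsymm : ∀ x y, s x y = s y x) (hdeg : IsDegenerateKernel μ X s)
    (hsL2 : ∀ i j, i ≠ j → MemLp (fun ω => s (X i ω) (X j ω)) 2 μ) {i₀ j₀ : ι}
    (h₀ : i₀ ≠ j₀) :
    vecCov μ (fun ω => ∑ ij ∈ univ.offDiag, s (X ij.1 ω) (X ij.2 ω))
        (fun ω => ∑ ij ∈ univ.offDiag, s (X ij.1 ω) (X ij.2 ω)) =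
      (2 * Fintype.card ι * (Fintype.card ι - 1) : ℝ) •
        vecCov μ (fun ω => s (X i₀ ω) (X j₀ ω)) (fun ω => s (X i₀ ω) (X j₀ ω)) := by
  classical
  set V := vecCov μ (fun ω => s (X i₀ ω) (X j₀ ω)) (fun ω => s (X i₀ ω) (X j₀ ω))
  have hL2 : ∀ ij ∈ (univ : Finset ι).offDiag, MemLp (fun ω => s (X ij.1 ω) (X ij.2 ω)) 2 μ :=
    fun ij hij => hsL2 _ _ (mem_offDiag.1 hij).2.2
  have hsum : MemLp (fun ω => ∑ ij ∈ univ.offDiag, s (X ij.1 ω) (X ij.2 ω)) 2 μ :=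
    memLp_finsetSum _ hL2
  calc _ = ∑ ij ∈ (univ : Finset ι).offDiag, vecCov μ (fun ω => s (X ij.1 ω) (X ij.2 ω))
          (fun ω => ∑ ij ∈ univ.offDiag, s (X ij.1 ω) (X ij.2 ω)) := vecCov_sum_left _ hL2 hsum
    _ = ∑ ij ∈ (univ : Finset ι).offDiag, (2 : ℝ) • V := by
      refine Finset.sum_congr rfl fun ij hij => ?_
      have hswap : ij.swap ∈ (univ : Finset ι).offDiag := by
        simpa [mem_offDiag, eq_comm] using hij
      rw [vecCov_sum_right _ (hL2 ij hij) hL2, Finset.sum_congr rfl fun kl hkl =>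
        vecCov_degenerate_degenerate hX hmeas hid hs hsymm hdeg hsL2 h₀ (mem_offDiag.1 hij).2.2
          (mem_offDiag.1 hkl).2.2, Finset.sum_add_distrib, Finset.sum_ite_eq', Finset.sum_ite_eq',
        if_pos hij, if_pos hswap, two_smul]
    _ = _ := by
      rw [Finset.sum_const, ← Nat.cast_smul_eq_nsmul ℝ, smul_smul, Finset.cast_card_offDiag,
        Finset.card_univ]
      ring_nf

lemma vecCov_sum_comp_sum_offDiag_eq_zero (hX : iIndepFun X μ)
    (hmeas : ∀ i, Measurable (X i)) (ha : Measurable a) (hs : Measurable (Function.uncurry s))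
    (hsymm : ∀ x y, s x y = s y x) (hdeg : IsDegenerateKernel μ X s)
    (haL2 : ∀ i, MemLp (fun ω => a (X i ω)) 2 μ)
    (hsL2 : ∀ i j, i ≠ j → MemLp (fun ω => s (X i ω) (X j ω)) 2 μ) :
    vecCov μ (fun ω => ∑ i, a (X i ω))
      (fun ω => ∑ ij ∈ univ.offDiag, s (X ij.1 ω) (X ij.2 ω)) = 0 := by
  have hL2 : ∀ ij ∈ (univ : Finset ι).offDiag, MemLp (fun ω => s (X ij.1 ω) (X ij.2 ω)) 2 μ :=
    fun ij hij => hsL2 _ _ (mem_offDiag.1 hij).2.2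
  have hsum : MemLp (fun ω => ∑ ij ∈ univ.offDiag, s (X ij.1 ω) (X ij.2 ω)) 2 μ :=
    memLp_finsetSum _ hL2
  rw [vecCov_sum_left (X := fun i ω => a (X i ω)) _ (fun i _ => haL2 i) hsum]
  refine Finset.sum_eq_zero fun i _ => ?_
  rw [vecCov_sum_right _ (haL2 i) hL2]
  exact Finset.sum_eq_zero fun ij hij => vecCov_comp_degenerate_eq_zero hX hmeas ha hs hsymm
    hdeg haL2 hsL2 i (mem_offDiag.1 hij).2.2

theorem vecCov_smul_sum_add_smul_sum_offDiag (hX : iIndepFun X μ)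
    (hmeas : ∀ i, Measurable (X i)) (hid : ∀ i j, IdentDistrib (X i) (X j) μ μ)
    (ha : Measurable a) (hs : Measurable (Function.uncurry s)) (hsymm : ∀ x y, s x y = s y x)
    (hdeg : IsDegenerateKernel μ X s) (haL2 : ∀ i, MemLp (fun ω => a (X i ω)) 2 μ)
    (hsL2 : ∀ i j, i ≠ j → MemLp (fun ω => s (X i ω) (X j ω)) 2 μ) (c d : ℝ) {i₀ j₀ : ι}
    (h₀ : i₀ ≠ j₀) :
    vecCov μ (fun ω => c • ∑ i, a (X i ω) + d • ∑ ij ∈ univ.offDiag, s (X ij.1 ω) (X ij.2 ω))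
        (fun ω => c • ∑ i, a (X i ω) + d • ∑ ij ∈ univ.offDiag, s (X ij.1 ω) (X ij.2 ω)) =
      (c ^ 2 * Fintype.card ι) • vecCov μ (fun ω => a (X i₀ ω)) (fun ω => a (X i₀ ω)) +
        (d ^ 2 * (2 * Fintype.card ι * (Fintype.card ι - 1))) •
          vecCov μ (fun ω => s (X i₀ ω) (X j₀ ω)) (fun ω => s (X i₀ ω) (X j₀ ω)) := by
  have hA : MemLp (fun ω => c • ∑ i, a (X i ω)) 2 μ :=
    (memLp_finsetSum _ fun i _ => haL2 i).const_smul c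
  have hS : MemLp (fun ω => d • ∑ ij ∈ univ.offDiag, s (X ij.1 ω) (X ij.2 ω)) 2 μ :=
    (memLp_finsetSum _ fun ij hij => hsL2 _ _ (mem_offDiag.1 hij).2.2).const_smul d
  have hAS := vecCov_sum_comp_sum_offDiag_eq_zero hX hmeas ha hs hsymm hdeg haL2 hsL2
  have hSA : vecCov μ (fun ω => ∑ ij ∈ univ.offDiag, s (X ij.1 ω) (X ij.2 ω))
      (fun ω => ∑ i, a (X i ω)) = 0 := by
    rw [vecCov_comm, hAS, Matrix.transpose_zero]
  have hT : MemLp (fun ω => c • ∑ i, a (X i ω) +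
      d • ∑ ij ∈ univ.offDiag, s (X ij.1 ω) (X ij.2 ω)) 2 μ := hA.add hS
  rw [vecCov_add_left hA hS hT, vecCov_add_right hA hA hS, vecCov_add_right hS hA hS,
    vecCov_smul_left, vecCov_smul_right, vecCov_smul_left, vecCov_smul_right, vecCov_smul_left,
    vecCov_smul_right, vecCov_smul_left, vecCov_smul_right, hAS, hSA,
    vecCov_sum_comp hX hid ha haL2 i₀,
    vecCov_sum_offDiag_degenerate hX hmeas hid hs hsymm hdeg hsL2 h₀]
  simp only [smul_zero, add_zero, zero_add, smul_smul]
  ring_nf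

end UStatistic

section UStatisticVariance

variable {Ω E ι : Type*} [MeasurableSpace Ω] [MeasurableSpace E] {μ : Measure Ω}
  [IsProbabilityMeasure μ] [Fintype ι] {X : ι → Ω → E} {n : ℕ} {a : E → Fin n → ℝ}
  {s : E → E → Fin n → ℝ}

theorem vecVar_smul_sum_add_smul_sum_offDiag_sub (hX : iIndepFun X μ)
    (hmeas : ∀ i, Measurable (X i)) (hid : ∀ i j, IdentDistrib (X i) (X j) μ μ)
    (ha : Measurable a) (hs : Measurable (Function.uncurry s)) (hsymm : ∀ x y, s x y = s y x)
    (hdeg : IsDegenerateKernel μ X s) (haL2 : ∀ i, MemLp (fun ω => a (X i ω)) 2 μ)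
    (hsL2 : ∀ i j, i ≠ j → MemLp (fun ω => s (X i ω) (X j ω)) 2 μ) (c d : ℝ) (v : Fin n → ℝ)
    {i₀ j₀ : ι} (h₀ : i₀ ≠ j₀) :
    vecVar μ (fun ω =>
        c • ∑ i, a (X i ω) + d • ∑ ij ∈ univ.offDiag, s (X ij.1 ω) (X ij.2 ω) - v) =
      (c ^ 2 * Fintype.card ι) • vecVar μ (fun ω => a (X i₀ ω)) +
        (d ^ 2 * (2 * Fintype.card ι * (Fintype.card ι - 1))) •
          vecVar μ (fun ω => s (X i₀ ω) (X j₀ ω)) := by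
  have hA : MemLp (fun ω => ∑ i, a (X i ω)) 2 μ := memLp_finsetSum _ fun i _ => haL2 i
  have hS : MemLp (fun ω => ∑ ij ∈ univ.offDiag, s (X ij.1 ω) (X ij.2 ω)) 2 μ :=
    memLp_finsetSum _ fun ij hij => hsL2 _ _ (mem_offDiag.1 hij).2.2
  have hT : MemLp (fun ω =>
      c • ∑ i, a (X i ω) + d • ∑ ij ∈ univ.offDiag, s (X ij.1 ω) (X ij.2 ω)) 2 μ :=
    (hA.const_smul c).add (hS.const_smul d)
  rw [vecVar_sub_const hT, vecVar_eq_vecCov hT, vecVar_eq_vecCov (haL2 i₀),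
    vecVar_eq_vecCov (hsL2 i₀ j₀ h₀)]
  exact vecCov_smul_sum_add_smul_sum_offDiag hX hmeas hid ha hs hsymm hdeg haL2 hsL2 c d h₀

end UStatisticVariance

end ProbabilityTheory

section GradientEstimator

variable {m n : ℕ} (J : Matrix (Fin m) (Fin n) ℝ) (Q : Fin m → ℝ)

def linearPart (x : (Fin m → ℝ) × Matrix (Fin m) (Fin n) ℝ) : Fin n → ℝ :=
  Jᵀ *ᵥ x.1 + x.2ᵀ *ᵥ Q

def degeneratePart (x y : (Fin m → ℝ) × Matrix (Fin m) (Fin n) ℝ) : Fin n → ℝ :=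
  (x.2 - J)ᵀ *ᵥ (y.1 - Q) + (y.2 - J)ᵀ *ᵥ (x.1 - Q)

lemma degeneratePart_comm (x y : (Fin m → ℝ) × Matrix (Fin m) (Fin n) ℝ) :
    degeneratePart J Q x y = degeneratePart J Q y x :=
  add_comm _ _

lemma sum_offDiag_transpose_mulVec {ι : Type*} [Fintype ι] [DecidableEq ι]
    (x : ι → (Fin m → ℝ) × Matrix (Fin m) (Fin n) ℝ) :
    ∑ ij ∈ univ.offDiag, (x ij.1).2ᵀ *ᵥ (x ij.2).1 =
      (1 / 2 : ℝ) • ∑ ij ∈ univ.offDiag, degeneratePart J Q (x ij.1) (x ij.2) +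
        ((Fintype.card ι : ℝ) - 1) • ∑ i, linearPart J Q (x i) -
        ((Fintype.card ι : ℝ) * (Fintype.card ι - 1)) • (Jᵀ *ᵥ Q) := by
  set b : ι × ι → Fin n → ℝ := fun ij => ((x ij.1).2 - J)ᵀ *ᵥ ((x ij.2).1 - Q)
  have hb : ∑ ij ∈ univ.offDiag, degeneratePart J Q (x ij.1) (x ij.2) =
      (2 : ℝ) • ∑ ij ∈ univ.offDiag, b ij := by
    rw [two_smul]
    nth_rewrite 2 [← Finset.sum_offDiag_swap]
    rw [← Finset.sum_add_distrib]
    exact Finset.sum_congr rfl fun ij _ => add_comm _ _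
  have hpoint : ∀ ij : ι × ι, (x ij.1).2ᵀ *ᵥ (x ij.2).1 =
      b ij + (Jᵀ *ᵥ (x ij.2).1 + (x ij.1).2ᵀ *ᵥ Q) - Jᵀ *ᵥ Q := by
    intro ij
    simp only [b, Matrix.transpose_sub, Matrix.sub_mulVec, Matrix.mulVec_sub]
    abel
  have hlin : ∑ ij ∈ (univ : Finset ι).offDiag, (Jᵀ *ᵥ (x ij.2).1 + (x ij.1).2ᵀ *ᵥ Q) =
      ((Fintype.card ι : ℝ) - 1) • ∑ i, linearPart J Q (x i) := by
    rw [Finset.sum_offDiag_eq_sum_sum_sub]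
    simp only [Finset.sum_add_distrib, Finset.sum_const, Finset.card_univ, linearPart, sub_smul,
      one_smul, Finset.smul_sum, Nat.cast_smul_eq_nsmul, smul_add, Finset.sum_sub_distrib]
    abel
  rw [Finset.sum_congr rfl fun ij _ => hpoint ij, Finset.sum_sub_distrib, Finset.sum_add_distrib,
    hlin, hb, smul_smul, Finset.sum_const, ← Nat.cast_smul_eq_nsmul ℝ, Finset.cast_card_offDiag,
    Finset.card_univ]
  norm_num

lemma smul_sum_sum_ite_ne_transpose_mulVec {ι : Type*} [Fintype ι] [DecidableEq ι] {N : ℕ}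
    (hcard : Fintype.card ι = N) (hN : 2 ≤ N) (x : ι → (Fin m → ℝ) × Matrix (Fin m) (Fin n) ℝ) :
    (1 / ((N : ℝ) * ((N : ℝ) - 1))) • ∑ i, ∑ j,
        (if i ≠ j then (x i).2ᵀ *ᵥ (x j).1 else 0) =
      (1 / (N : ℝ)) • ∑ i, linearPart J Q (x i) +
        (1 / (2 * N * (N - 1)) : ℝ) • ∑ ij ∈ univ.offDiag, degeneratePart J Q (x ij.1) (x ij.2) -
        Jᵀ *ᵥ Q := by
  have hN₀ : (N : ℝ) ≠ 0 := by positivity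
  have hN₁ : (N : ℝ) - 1 ≠ 0 := sub_ne_zero.2 (by exact_mod_cast (by omega : N ≠ 1))
  rw [Finset.sum_sum_ite_ne, sum_offDiag_transpose_mulVec, hcard]
  match_scalars <;> field_simp

lemma measurable_transpose_mulVec {α : Type*} [MeasurableSpace α]
    {M : α → Matrix (Fin m) (Fin n) ℝ} {v : α → Fin m → ℝ}
    (hM : ∀ r p, Measurable fun a => M a r p) (hv : ∀ r, Measurable fun a => v a r) :
    Measurable fun a => (M a)ᵀ *ᵥ v a := by
  refine measurable_pi_lambda _ fun p => ?_
  simp only [Matrix.mulVec, dotProduct, Matrix.transpose_apply]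
  exact Finset.measurable_sum _ fun r _ => (hM r p).mul (hv r)

lemma measurable_linearPart : Measurable (linearPart J Q) :=
  (measurable_transpose_mulVec (M := fun _ => J) (fun _ _ => measurable_const)
      fun r => (measurable_pi_apply r).comp measurable_fst).add
    (measurable_transpose_mulVec (v := fun _ => Q)
      (fun r p => (measurable_pi_apply p).comp ((measurable_pi_apply r).comp measurable_snd))
      fun _ => measurable_const)

lemma measurable_degeneratePart : Measurable (Function.uncurry (degeneratePart J Q)) := by
  have h₁ : ∀ r, Measurable fun z : (Fin m → ℝ) × Matrix (Fin m) (Fin n) ℝ => z.1 r :=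
    fun r => (measurable_pi_apply r).comp measurable_fst
  have h₂ : ∀ r p, Measurable fun z : (Fin m → ℝ) × Matrix (Fin m) (Fin n) ℝ => z.2 r p :=
    fun r p => (measurable_pi_apply p).comp ((measurable_pi_apply r).comp measurable_snd)
  exact (measurable_transpose_mulVec (fun r p => ((h₂ r p).comp measurable_fst).sub
      measurable_const) fun r => ((h₁ r).comp measurable_snd).sub measurable_const).add
    (measurable_transpose_mulVec (fun r p => ((h₂ r p).comp measurable_snd).sub
      measurable_const) fun r => ((h₁ r).comp measurable_fst).sub measurable_const)

variable {Ω : Type*} [MeasurableSpace Ω] {μ : Measure Ω}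

lemma memLp_transpose_mulVec_const [IsFiniteMeasure μ] {M : Ω → Matrix (Fin m) (Fin n) ℝ}
    (hM : ∀ r p, MemLp (fun ω => M ω r p) 2 μ) (v : Fin m → ℝ) :
    MemLp (fun ω => (M ω)ᵀ *ᵥ v) 2 μ := by
  refine memLp_pi_iff.2 fun p => ?_
  simp only [Matrix.mulVec, dotProduct, Matrix.transpose_apply]
  exact memLp_finsetSum _ fun r _ => (hM r p).mul_const (v r)

lemma memLp_const_transpose_mulVec [IsFiniteMeasure μ] {v : Ω → Fin m → ℝ} (hv : MemLp v 2 μ) :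
    MemLp (fun ω => Jᵀ *ᵥ v ω) 2 μ := by
  refine memLp_pi_iff.2 fun p => ?_
  simp only [Matrix.mulVec, dotProduct, Matrix.transpose_apply]
  exact memLp_finsetSum _ fun r _ => (hv.eval r).const_mul (J r p)

lemma memLp_sub_transpose_mulVec_sub [IsFiniteMeasure μ] {M : Ω → Matrix (Fin m) (Fin n) ℝ}
    {v : Ω → Fin m → ℝ} (hMv : MemLp (fun ω => (M ω)ᵀ *ᵥ v ω) 2 μ)
    (hM : ∀ r p, MemLp (fun ω => M ω r p) 2 μ) (hv : MemLp v 2 μ) :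
    MemLp (fun ω => (M ω - J)ᵀ *ᵥ (v ω - Q)) 2 μ := by
  have h : (fun ω => (M ω - J)ᵀ *ᵥ (v ω - Q)) =
      fun ω => (M ω)ᵀ *ᵥ v ω - (M ω)ᵀ *ᵥ Q - (Jᵀ *ᵥ v ω - Jᵀ *ᵥ Q) := by
    funext ω
    simp only [Matrix.transpose_sub, Matrix.sub_mulVec, Matrix.mulVec_sub]
    abel
  rw [h]
  exact (hMv.sub (memLp_transpose_mulVec_const hM Q)).sub
    ((memLp_const_transpose_mulVec J hv).sub (memLp_const _))

lemma memLp_linearPart [IsFiniteMeasure μ] {v : Ω → Fin m → ℝ}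
    {M : Ω → Matrix (Fin m) (Fin n) ℝ} (hv : MemLp v 2 μ)
    (hM : ∀ r p, MemLp (fun ω => M ω r p) 2 μ) :
    MemLp (fun ω => linearPart J Q (v ω, M ω)) 2 μ :=
  (memLp_const_transpose_mulVec J hv).add (memLp_transpose_mulVec_const hM Q)

lemma memLp_degeneratePart [IsFiniteMeasure μ] {v w : Ω → Fin m → ℝ}
    {M M' : Ω → Matrix (Fin m) (Fin n) ℝ} (hMw : MemLp (fun ω => (M ω)ᵀ *ᵥ w ω) 2 μ)
    (hM'v : MemLp (fun ω => (M' ω)ᵀ *ᵥ v ω) 2 μ) (hv : MemLp v 2 μ) (hw : MemLp w 2 μ)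
    (hM : ∀ r p, MemLp (fun ω => M ω r p) 2 μ) (hM' : ∀ r p, MemLp (fun ω => M' ω r p) 2 μ) :
    MemLp (fun ω => degeneratePart J Q (v ω, M ω) (w ω, M' ω)) 2 μ :=
  (memLp_sub_transpose_mulVec_sub J Q hMw hM hw).add
    (memLp_sub_transpose_mulVec_sub J Q hM'v hM' hv)

lemma isDegenerateKernel_degeneratePart [IsProbabilityMeasure μ] {ι : Type*}
    {Qh : ι → Ω → Fin m → ℝ} {Jh : ι → Ω → Matrix (Fin m) (Fin n) ℝ}
    (hQ : ∀ i r, Integrable (fun ω => Qh i ω r) μ)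
    (hJ : ∀ i r p, Integrable (fun ω => Jh i ω r p) μ)
    (hQunb : ∀ i r, ∫ ω, Qh i ω r ∂μ = Q r) (hJunb : ∀ i r p, ∫ ω, Jh i ω r p ∂μ = J r p) :
    ProbabilityTheory.IsDegenerateKernel μ (fun i ω => (Qh i ω, Jh i ω)) (degeneratePart J Q) := by
  intro x l p
  have hQc : ∀ r, Integrable (fun ω => Qh l ω r - Q r) μ :=
    fun r => (hQ l r).sub (integrable_const _)
  have hJc : ∀ r, Integrable (fun ω => Jh l ω r p - J r p) μ :=
    fun r => (hJ l r p).sub (integrable_const _)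
  have hQ0 : ∀ r, ∫ ω, (Qh l ω r - Q r) ∂μ = 0 := fun r => by
    rw [integral_sub (hQ l r) (integrable_const _), hQunb, integral_const, probReal_univ,
      one_smul, sub_self]
  have hJ0 : ∀ r, ∫ ω, (Jh l ω r p - J r p) ∂μ = 0 := fun r => by
    rw [integral_sub (hJ l r p) (integrable_const _), hJunb, integral_const, probReal_univ,
      one_smul, sub_self]
  simp only [degeneratePart, Pi.add_apply, Matrix.mulVec, dotProduct, Matrix.transpose_apply,
    Matrix.sub_apply, Pi.sub_apply]
  rw [integral_add (integrable_finsetSum _ fun r _ => (hQc r).const_mul _)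
    (integrable_finsetSum _ fun r _ => (hJc r).mul_const _),
    integral_finsetSum _ fun r _ => (hQc r).const_mul _,
    integral_finsetSum _ fun r _ => (hJc r).mul_const _]
  simp only [integral_const_mul, integral_mul_const, hQ0, hJ0, mul_zero, zero_mul,
    Finset.sum_const_zero, add_zero]

end GradientEstimator

open ProbabilityTheory in
/-- Lemma B.2: given `N ≥ 2` i.i.d. pairs `(Q̂⁽ⁱ⁾, Ĵ⁽ⁱ⁾)` of unbiased
estimators of `Q` and `J`, the covariance matrix of the gradient estimator
`(1/(N(N−1))) Σ_{i ≠ j} (Ĵ⁽ⁱ⁾)ᵀ Q̂⁽ʲ⁾` equals `Σ_A²/N + Σ_B²/(N(N−1))`, where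
`Σ_A² = Var[Jᵀ Q̂ + Ĵᵀ Q]` and `Σ_B² = (1/2)·Var[(Ĵ−J)ᵀ(Q̂′−Q) + (Ĵ′−J)ᵀ(Q̂−Q)]`
(computed from two of the independent copies, hence not depending on `N`) are positive
semidefinite matrices. -/
theorem stmt1 {Ω : Type*} [MeasurableSpace Ω] (μ : Measure Ω) [IsProbabilityMeasure μ]
    {m n : ℕ} {N : ℕ} (hN : 2 ≤ N)
    (Qh : Fin N → Ω → Fin m → ℝ) (Jh : Fin N → Ω → Matrix (Fin m) (Fin n) ℝ)
    (Q : Fin m → ℝ) (J : Matrix (Fin m) (Fin n) ℝ)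
    (hmeas : ∀ i, Measurable fun ω => (Qh i ω, Jh i ω))
    (hindep : ProbabilityTheory.iIndepFun
      (fun i ω => (Qh i ω, Jh i ω)) μ)
    (hid : ∀ i j, ProbabilityTheory.IdentDistrib (fun ω => (Qh i ω, Jh i ω))
      (fun ω => (Qh j ω, Jh j ω)) μ μ)
    (hQunb : ∀ a i, ∫ ω, Qh a ω i ∂μ = Q i)
    (hJunb : ∀ a i j, ∫ ω, Jh a ω i j ∂μ = J i j)
    -- finite second moments of the products
    (hQ2 : ∀ a i, MemLp (fun ω => Qh a ω i) 2 μ)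
    (hJ2 : ∀ a i j, MemLp (fun ω => Jh a ω i j) 2 μ)
    (hprod2 : ∀ a b, ∀ i : Fin n,
      MemLp (fun ω => ((Jh a ω)ᵀ.mulVec (Qh b ω)) i) 2 μ) :
    vecVar μ (fun ω => (1 / ((N : ℝ) * ((N : ℝ) - 1))) •
        ∑ i : Fin N, ∑ j : Fin N,
          if i ≠ j then (Jh i ω)ᵀ.mulVec (Qh j ω) else 0) =
      (1 / (N : ℝ)) • vecVar μ (fun ω =>
          Jᵀ.mulVec (Qh ⟨0, by omega⟩ ω) + (Jh ⟨0, by omega⟩ ω)ᵀ.mulVec Q) +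
        (1 / ((N : ℝ) * ((N : ℝ) - 1))) • ((1 / 2 : ℝ) • vecVar μ (fun ω =>
          (Jh ⟨0, by omega⟩ ω - J)ᵀ.mulVec (Qh ⟨1, by omega⟩ ω - Q) +
            (Jh ⟨1, by omega⟩ ω - J)ᵀ.mulVec (Qh ⟨0, by omega⟩ ω - Q))) ∧
    (vecVar μ (fun ω =>
        Jᵀ.mulVec (Qh ⟨0, by omega⟩ ω) + (Jh ⟨0, by omega⟩ ω)ᵀ.mulVec Q)).PosSemidef ∧
    ((1 / 2 : ℝ) • vecVar μ (fun ω =>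
        (Jh ⟨0, by omega⟩ ω - J)ᵀ.mulVec (Qh ⟨1, by omega⟩ ω - Q) +
          (Jh ⟨1, by omega⟩ ω - J)ᵀ.mulVec (Qh ⟨0, by omega⟩ ω - Q))).PosSemidef := by
  classical
  set X : Fin N → Ω → (Fin m → ℝ) × Matrix (Fin m) (Fin n) ℝ := fun i ω => (Qh i ω, Jh i ω)
  set i₀ : Fin N := ⟨0, by omega⟩
  set i₁ : Fin N := ⟨1, by omega⟩
  have h₀₁ : i₀ ≠ i₁ := by simp [i₀, i₁, Fin.ext_iff]
  have hQ : ∀ i, MemLp (Qh i) 2 μ := fun i => memLp_pi_iff.2 (hQ2 i)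
  have haL2 : ∀ i, MemLp (fun ω => linearPart J Q (X i ω)) 2 μ :=
    fun i => memLp_linearPart J Q (hQ i) (hJ2 i)
  have hsL2 : ∀ i j, i ≠ j → MemLp (fun ω => degeneratePart J Q (X i ω) (X j ω)) 2 μ :=
    fun i j _ => memLp_degeneratePart J Q (memLp_pi_iff.2 (hprod2 i j))
      (memLp_pi_iff.2 (hprod2 j i)) (hQ i) (hQ j) (hJ2 i) (hJ2 j)
  have hdeg := isDegenerateKernel_degeneratePart J Q (fun i r => (hQ2 i r).integrable one_le_two)
    (fun i r p => (hJ2 i r p).integrable one_le_two) hQunb hJunb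
  refine ⟨?_, posSemidef_vecVar (haL2 i₀), (posSemidef_vecVar (hsL2 i₀ i₁ h₀₁)).smul (by norm_num)⟩
  change _ = (1 / (N : ℝ)) • vecVar μ (fun ω => linearPart J Q (X i₀ ω)) +
    _ • (_ • vecVar μ (fun ω => degeneratePart J Q (X i₀ ω) (X i₁ ω)))
  have hN₀ : (N : ℝ) ≠ 0 := by positivity
  have hN₁ : (N : ℝ) - 1 ≠ 0 := sub_ne_zero.2 (by exact_mod_cast (by omega : N ≠ 1))
  rw [funext fun ω => smul_sum_sum_ite_ne_transpose_mulVec J Q (Fintype.card_fin N) hN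
      fun i => X i ω, vecVar_smul_sum_add_smul_sum_offDiag_sub hindep hmeas hid
      (measurable_linearPart J Q) (measurable_degeneratePart J Q) (degeneratePart_comm J Q) hdeg
      haL2 hsL2 _ _ _ h₀₁, Fintype.card_fin]
  match_scalars <;> field_simp
end

section
/- Let (Q̂, Ĵ) and (Q̂′, Ĵ′) be two i.i.d. pairs of random elements of ℝ^m × ℝ^{m×n} with E[Q̂] = Q, E[Ĵ] = J and finite second moments of the relevant products. Writing ε_J = Ĵ − J, ε_Q = Q̂ − Q, ε_J′ = Ĵ′ − J, ε_Q′ = Q̂′ − Q, one has E[Ĵᵀ Q̂′ Q̂′ᵀ Ĵ + Ĵᵀ Q̂′ Q̂ᵀ Ĵ′ − Jᵀ Q̂ Q̂ᵀ J − Jᵀ Q̂ Qᵀ Ĵ − Ĵᵀ Q Q̂ᵀ J − Ĵᵀ Q Qᵀ Ĵ + 2 Jᵀ Q Qᵀ J] = (1/2) Var[ε_Jᵀ ε_Q′ + ε_J′ᵀ ε_Q]; in particular this matrix is positive semidefinite. -/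
/-!
Write `X = (Q̂, Ĵ)` and `X′ = (Q̂′, Ĵ′)`. Entrywise, both sides are double sums over `i, j` of
expressions in four coordinates `a = Ĵ_{ia}`, `b = Ĵ_{jb}`, `c = Q̂_i`, `d = Q̂_j` of the two
copies. Independence and equal distribution factor every mixed moment as
`E[u(X) v(X′)] = E[u(X)] E[v(X)]`. After this, the `(i, j)` summand of the left side and half
the covariance of the symmetrised errors `(a(X) - Ea)(c(X′) - Ec) + (a(X′) - Ea)(c(X) - Ec)`
both reduce to `Cov(a, b) Cov(c, d) + Cov(a, d) Cov(c, b)`. Positive semidefiniteness is then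
that of a covariance matrix: `xᵀ Var[Y] x = Var[xᵀ Y] ≥ 0`.
-/

open MeasureTheory Matrix

/-- Entrywise expectation of a random matrix. -/
noncomputable def matMean {Ω : Type*} [MeasurableSpace Ω] (μ : Measure Ω) {n m : ℕ}
    (X : Ω → Matrix (Fin n) (Fin m) ℝ) : Matrix (Fin n) (Fin m) ℝ :=
  Matrix.of fun i j => ∫ ω, X ω i j ∂μ

namespace ProbabilityTheory

lemma IndepFun.memLp_two_mul {Ω : Type*} [MeasurableSpace Ω] {μ : Measure Ω} {f g : Ω → ℝ}
    (h : IndepFun f g μ) (hf : MemLp f 2 μ) (hg : MemLp g 2 μ) : MemLp (f * g) 2 μ := by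
  rw [memLp_two_iff_integrable_sq (hf.1.mul hg.1)]
  simp only [Pi.mul_apply, mul_pow]
  exact (h.comp (measurable_id.pow_const 2) (measurable_id.pow_const 2)).integrable_mul
    hf.integrable_sq hg.integrable_sq

lemma integral_comp_sub_integral_comp {Ω E : Type*} [MeasurableSpace Ω] {μ : Measure Ω}
    [IsProbabilityMeasure μ] {X : Ω → E} {a : E → ℝ} (ha : Integrable (a ∘ X) μ) :
    μ[(fun x => a x - μ[a ∘ X]) ∘ X] = 0 := by
  change ∫ ω, ((a ∘ X) ω - μ[a ∘ X]) ∂μ = 0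
  rw [integral_sub ha (integrable_const _), integral_const, probReal_univ, one_smul, sub_self]

section IIDCopies

variable {Ω E : Type*} [MeasurableSpace Ω] [MeasurableSpace E] {μ : Measure Ω}
  {X X' : Ω → E} {u v a b c d : E → ℝ}

lemma IndepFun.integrable_comp_mul_comp_of_identDistrib (hind : IndepFun X X' μ)
    (hid : IdentDistrib X X' μ μ) (hu : Measurable u) (hv : Measurable v)
    (hu1 : Integrable (u ∘ X) μ) (hv1 : Integrable (v ∘ X) μ) :
    Integrable (fun ω => u (X ω) * v (X' ω)) μ :=
  (hind.comp hu hv).integrable_mul hu1 ((hid.comp hv).integrable_snd hv1)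

lemma IndepFun.integral_comp_mul_comp_of_identDistrib (hind : IndepFun X X' μ)
    (hid : IdentDistrib X X' μ μ) (hu : Measurable u) (hv : Measurable v) :
    ∫ ω, u (X ω) * v (X' ω) ∂μ = μ[u ∘ X] * μ[v ∘ X] := by
  rw [hind.integral_fun_comp_mul_comp hid.aemeasurable_fst hid.aemeasurable_snd
    hu.aestronglyMeasurable hv.aestronglyMeasurable]
  exact congrArg _ (hid.comp hv).integral_eq.symm

lemma IndepFun.memLp_two_comp_mul_comp_of_identDistrib (hind : IndepFun X X' μ)
    (hid : IdentDistrib X X' μ μ) (hu : Measurable u) (hv : Measurable v)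
    (hu2 : MemLp (u ∘ X) 2 μ) (hv2 : MemLp (v ∘ X) 2 μ) :
    MemLp (fun ω => u (X ω) * v (X' ω)) 2 μ :=
  (hind.comp hu hv).memLp_two_mul hu2 ((hid.comp hv).memLp_snd hv2)

/-- With `a = Ĵ_{ia}` and `c = Q̂_i`, summing over `i` gives the `a`-th entry of
`ε_Jᵀ ε_Q′ + ε_J′ᵀ ε_Q`. -/
noncomputable def symmErrorProd (μ : Measure Ω) (X X' : Ω → E) (a c : E → ℝ) (ω : Ω) : ℝ :=
  (a (X ω) - μ[a ∘ X]) * (c (X' ω) - μ[c ∘ X]) +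
    (a (X' ω) - μ[a ∘ X]) * (c (X ω) - μ[c ∘ X])

lemma memLp_symmErrorProd [IsFiniteMeasure μ] (hind : IndepFun X X' μ)
    (hid : IdentDistrib X X' μ μ) (ha : Measurable a) (hc : Measurable c)
    (ha2 : MemLp (a ∘ X) 2 μ) (hc2 : MemLp (c ∘ X) 2 μ) :
    MemLp (symmErrorProd μ X X' a c) 2 μ := by
  have hac := hind.memLp_two_comp_mul_comp_of_identDistrib hid (ha.sub_const μ[a ∘ X])
    (hc.sub_const μ[c ∘ X]) (ha2.sub (memLp_const _)) (hc2.sub (memLp_const _))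
  have hca := hind.memLp_two_comp_mul_comp_of_identDistrib hid (hc.sub_const μ[c ∘ X])
    (ha.sub_const μ[a ∘ X]) (hc2.sub (memLp_const _)) (ha2.sub (memLp_const _))
  convert hac.add hca using 1
  funext ω
  simp only [symmErrorProd, Pi.add_apply]
  ring

lemma integral_symmErrorProd [IsProbabilityMeasure μ] (hind : IndepFun X X' μ)
    (hid : IdentDistrib X X' μ μ) (ha : Measurable a) (hc : Measurable c)
    (ha1 : Integrable (a ∘ X) μ) (hc1 : Integrable (c ∘ X) μ) :
    ∫ ω, symmErrorProd μ X X' a c ω ∂μ = 0 := by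
  have hac := hind.integrable_comp_mul_comp_of_identDistrib hid (ha.sub_const μ[a ∘ X])
    (hc.sub_const μ[c ∘ X]) (ha1.sub (integrable_const _)) (hc1.sub (integrable_const _))
  have hca := hind.integrable_comp_mul_comp_of_identDistrib hid (hc.sub_const μ[c ∘ X])
    (ha.sub_const μ[a ∘ X]) (hc1.sub (integrable_const _)) (ha1.sub (integrable_const _))
  calc ∫ ω, symmErrorProd μ X X' a c ω ∂μ
      = ∫ ω, ((a (X ω) - μ[a ∘ X]) * (c (X' ω) - μ[c ∘ X]) +
          (c (X ω) - μ[c ∘ X]) * (a (X' ω) - μ[a ∘ X])) ∂μ :=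
        integral_congr_ae (ae_of_all _ fun ω => by simp only [symmErrorProd]; ring)
    _ = 0 := by
      rw [integral_add hac hca,
        hind.integral_comp_mul_comp_of_identDistrib hid (ha.sub_const _) (hc.sub_const _),
        hind.integral_comp_mul_comp_of_identDistrib hid (hc.sub_const _) (ha.sub_const _),
        integral_comp_sub_integral_comp ha1, integral_comp_sub_integral_comp hc1]
      ring

lemma integrable_centered_mul_centered_copy [IsFiniteMeasure μ] (hind : IndepFun X X' μ)
    (hid : IdentDistrib X X' μ μ)
    (ha : Measurable a) (hb : Measurable b) (hc : Measurable c) (hd : Measurable d)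
    (ha2 : MemLp (a ∘ X) 2 μ) (hb2 : MemLp (b ∘ X) 2 μ)
    (hc2 : MemLp (c ∘ X) 2 μ) (hd2 : MemLp (d ∘ X) 2 μ) :
    Integrable (fun ω => (a (X ω) - μ[a ∘ X]) * (b (X ω) - μ[b ∘ X]) *
        ((c (X' ω) - μ[c ∘ X]) * (d (X' ω) - μ[d ∘ X]))) μ :=
  hind.integrable_comp_mul_comp_of_identDistrib hid
    ((ha.sub_const _).mul (hb.sub_const _)) ((hc.sub_const _).mul (hd.sub_const _))
    ((ha2.sub (memLp_const _)).integrable_mul (hb2.sub (memLp_const _)))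
    ((hc2.sub (memLp_const _)).integrable_mul (hd2.sub (memLp_const _)))

lemma integral_centered_mul_centered_copy (hind : IndepFun X X' μ) (hid : IdentDistrib X X' μ μ)
    (ha : Measurable a) (hb : Measurable b) (hc : Measurable c) (hd : Measurable d) :
    ∫ ω, (a (X ω) - μ[a ∘ X]) * (b (X ω) - μ[b ∘ X]) *
        ((c (X' ω) - μ[c ∘ X]) * (d (X' ω) - μ[d ∘ X])) ∂μ =
      cov[a ∘ X, b ∘ X; μ] * cov[c ∘ X, d ∘ X; μ] :=
  hind.integral_comp_mul_comp_of_identDistrib hid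
    ((ha.sub_const _).mul (hb.sub_const _)) ((hc.sub_const _).mul (hd.sub_const _))

lemma covariance_symmErrorProd [IsProbabilityMeasure μ] (hind : IndepFun X X' μ)
    (hid : IdentDistrib X X' μ μ)
    (ha : Measurable a) (hb : Measurable b) (hc : Measurable c) (hd : Measurable d)
    (ha2 : MemLp (a ∘ X) 2 μ) (hb2 : MemLp (b ∘ X) 2 μ)
    (hc2 : MemLp (c ∘ X) 2 μ) (hd2 : MemLp (d ∘ X) 2 μ) :
    cov[symmErrorProd μ X X' a c, symmErrorProd μ X X' b d; μ] =
      2 * (cov[a ∘ X, b ∘ X; μ] * cov[c ∘ X, d ∘ X; μ] +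
        cov[a ∘ X, d ∘ X; μ] * cov[c ∘ X, b ∘ X; μ]) := by
  rw [covariance_eq_sub (memLp_symmErrorProd hind hid ha hc ha2 hc2)
      (memLp_symmErrorProd hind hid hb hd hb2 hd2),
    integral_symmErrorProd hind hid ha hc (ha2.integrable one_le_two) (hc2.integrable one_le_two),
    zero_mul, sub_zero]
  have := integrable_centered_mul_centered_copy hind hid ha hb hc hd ha2 hb2 hc2 hd2
  have := integrable_centered_mul_centered_copy hind hid ha hd hc hb ha2 hd2 hc2 hb2
  have := integrable_centered_mul_centered_copy hind hid hc hb ha hd hc2 hb2 ha2 hd2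
  have := integrable_centered_mul_centered_copy hind hid hc hd ha hb hc2 hd2 ha2 hb2
  calc ∫ ω, symmErrorProd μ X X' a c ω * symmErrorProd μ X X' b d ω ∂μ
      = ∫ ω, ((a (X ω) - μ[a ∘ X]) * (b (X ω) - μ[b ∘ X]) *
            ((c (X' ω) - μ[c ∘ X]) * (d (X' ω) - μ[d ∘ X])) +
          (a (X ω) - μ[a ∘ X]) * (d (X ω) - μ[d ∘ X]) *
            ((c (X' ω) - μ[c ∘ X]) * (b (X' ω) - μ[b ∘ X])) +
          (c (X ω) - μ[c ∘ X]) * (b (X ω) - μ[b ∘ X]) *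
            ((a (X' ω) - μ[a ∘ X]) * (d (X' ω) - μ[d ∘ X])) +
          (c (X ω) - μ[c ∘ X]) * (d (X ω) - μ[d ∘ X]) *
            ((a (X' ω) - μ[a ∘ X]) * (b (X' ω) - μ[b ∘ X]))) ∂μ :=
        integral_congr_ae (ae_of_all _ fun ω => by simp only [symmErrorProd]; ring)
    _ = _ := by
      simp (disch := fun_prop) only [integral_add, integral_centered_mul_centered_copy hind hid]
      ring

/-- With `a = Ĵ_{ia}`, `b = Ĵ_{jb}`, `c = Q̂_i`, `d = Q̂_j`, summing over `i, j` gives the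
`(a, b)` entry of the matrix whose mean the theorem computes. -/
noncomputable def estimatorSummand (μ : Measure Ω) (X X' : Ω → E) (a b c d : E → ℝ)
    (ω : Ω) : ℝ :=
  a (X ω) * b (X ω) * (c (X' ω) * d (X' ω)) + a (X ω) * d (X ω) * (c (X' ω) * b (X' ω))
    - μ[a ∘ X] * μ[b ∘ X] * (c (X ω) * d (X ω)) - μ[a ∘ X] * μ[d ∘ X] * (c (X ω) * b (X ω))
    - μ[c ∘ X] * μ[b ∘ X] * (a (X ω) * d (X ω)) - μ[c ∘ X] * μ[d ∘ X] * (a (X ω) * b (X ω))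
    + 2 * (μ[a ∘ X] * μ[b ∘ X] * μ[c ∘ X] * μ[d ∘ X])

lemma integrable_estimatorSummand [IsFiniteMeasure μ] (hind : IndepFun X X' μ)
    (hid : IdentDistrib X X' μ μ)
    (ha : Measurable a) (hb : Measurable b) (hc : Measurable c) (hd : Measurable d)
    (ha2 : MemLp (a ∘ X) 2 μ) (hb2 : MemLp (b ∘ X) 2 μ)
    (hc2 : MemLp (c ∘ X) 2 μ) (hd2 : MemLp (d ∘ X) 2 μ) :
    Integrable (estimatorSummand μ X X' a b c d) μ := by
  have hab := ha2.integrable_mul hb2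
  have had := ha2.integrable_mul hd2
  have hcb := hc2.integrable_mul hb2
  have hcd := hc2.integrable_mul hd2
  have := hind.integrable_comp_mul_comp_of_identDistrib hid (ha.fun_mul hb) (hc.fun_mul hd)
    hab hcd
  have := hind.integrable_comp_mul_comp_of_identDistrib hid (ha.fun_mul hd) (hc.fun_mul hb)
    had hcb
  simp only [Function.comp_def, Pi.mul_def] at hab had hcb hcd
  unfold estimatorSummand
  fun_prop

lemma integral_estimatorSummand [IsProbabilityMeasure μ] (hind : IndepFun X X' μ)
    (hid : IdentDistrib X X' μ μ)
    (ha : Measurable a) (hb : Measurable b) (hc : Measurable c) (hd : Measurable d)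
    (ha2 : MemLp (a ∘ X) 2 μ) (hb2 : MemLp (b ∘ X) 2 μ)
    (hc2 : MemLp (c ∘ X) 2 μ) (hd2 : MemLp (d ∘ X) 2 μ) :
    ∫ ω, estimatorSummand μ X X' a b c d ω ∂μ =
      cov[a ∘ X, b ∘ X; μ] * cov[c ∘ X, d ∘ X; μ] +
        cov[a ∘ X, d ∘ X; μ] * cov[c ∘ X, b ∘ X; μ] := by
  have hmoment {p q : E → ℝ} (hp : MemLp (fun ω => p (X ω)) 2 μ)
      (hq : MemLp (fun ω => q (X ω)) 2 μ) :
      ∫ ω, p (X ω) * q (X ω) ∂μ =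
        cov[fun ω => p (X ω), fun ω => q (X ω); μ] + (∫ ω, p (X ω) ∂μ) * ∫ ω, q (X ω) ∂μ := by
    rw [covariance_eq_sub hp hq, sub_add_cancel]
    rfl
  have hab := ha2.integrable_mul hb2
  have had := ha2.integrable_mul hd2
  have hcb := hc2.integrable_mul hb2
  have hcd := hc2.integrable_mul hd2
  have := hind.integrable_comp_mul_comp_of_identDistrib hid (ha.fun_mul hb) (hc.fun_mul hd)
    hab hcd
  have := hind.integrable_comp_mul_comp_of_identDistrib hid (ha.fun_mul hd) (hc.fun_mul hb)
    had hcb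
  simp only [Function.comp_def, Pi.mul_def] at hab had hcb hcd
  simp (disch := fun_prop) only [estimatorSummand, integral_add, integral_sub, integral_const_mul,
    integral_const, probReal_univ, one_smul]
  rw [hind.integral_comp_mul_comp_of_identDistrib hid (ha.fun_mul hb) (hc.fun_mul hd),
    hind.integral_comp_mul_comp_of_identDistrib hid (ha.fun_mul hd) (hc.fun_mul hb)]
  simp only [Function.comp_def, hmoment ha2 hb2, hmoment ha2 hd2, hmoment hc2 hb2,
    hmoment hc2 hd2]
  ring

end IIDCopies

end ProbabilityTheory

open ProbabilityTheory

lemma Matrix.transpose_mul_vecMulVec_mul_apply {l m n R : Type*} [Fintype l] [Fintype m]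
    [CommSemiring R] (A : Matrix l m R) (u v : l → R) (B : Matrix l n R) (a : m) (b : n) :
    (Aᵀ * vecMulVec u v * B) a b = ∑ i, ∑ j, A i a * u i * v j * B j b := by
  simp only [mul_apply, vecMulVec_apply, transpose_apply, Finset.sum_mul]
  rw [Finset.sum_comm]
  exact Finset.sum_congr rfl fun i _ => Finset.sum_congr rfl fun j _ => by ring

section VecVar

variable {Ω : Type*} [MeasurableSpace Ω] {μ : Measure Ω} [IsProbabilityMeasure μ] {n : ℕ}
  {X : Ω → Fin n → ℝ}

lemma vecVar_apply_eq_covariance (hX : ∀ i, MemLp (fun ω => X ω i) 2 μ) (i j : Fin n) :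
    vecVar μ X i j = cov[fun ω => X ω i, fun ω => X ω j; μ] := by
  rw [covariance_eq_sub (hX i) (hX j)]
  rfl

lemma posSemidef_vecVar (hX : ∀ i, MemLp (fun ω => X ω i) 2 μ) : (vecVar μ X).PosSemidef := by
  refine PosSemidef.of_dotProduct_mulVec_nonneg ?_ fun x => ?_
  · ext i j
    simp [vecVar_apply_eq_covariance hX, covariance_comm]
  · have hx : ∀ i, MemLp (fun ω => star x i * X ω i) 2 μ := fun i => (hX i).const_mul _
    calc (0 : ℝ) ≤ Var[fun ω => ∑ i, star x i * X ω i; μ] := variance_nonneg _ _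
      _ = cov[fun ω => ∑ i, star x i * X ω i, fun ω => ∑ i, star x i * X ω i; μ] :=
        (covariance_self (memLp_finsetSum _ fun i _ => hx i).aemeasurable).symm
      _ = star x ⬝ᵥ (vecVar μ X *ᵥ x) := by
        rw [covariance_fun_sum_fun_sum hx hx]
        simp only [dotProduct, mulVec, vecVar_apply_eq_covariance hX, covariance_const_mul_left,
          covariance_const_mul_right, Finset.mul_sum, star_trivial]
        exact Finset.sum_congr rfl fun i _ => Finset.sum_congr rfl fun j _ => by ring

end VecVar

section PairedEstimators

variable {Ω : Type*} [MeasurableSpace Ω] {μ : Measure Ω} {m n : ℕ}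
  {Qh Qh' : Ω → Fin m → ℝ} {Jh Jh' : Ω → Matrix (Fin m) (Fin n) ℝ} {Q : Fin m → ℝ}
  {J : Matrix (Fin m) (Fin n) ℝ}

lemma measurable_fst_apply (i : Fin m) :
    Measurable fun p : (Fin m → ℝ) × Matrix (Fin m) (Fin n) ℝ => p.1 i := by
  fun_prop

lemma measurable_snd_apply (i : Fin m) (a : Fin n) :
    Measurable fun p : (Fin m → ℝ) × Matrix (Fin m) (Fin n) ℝ => p.2 i a := by
  fun_prop

lemma symmError_apply_eq_sum (hQunb : ∀ i, ∫ ω, Qh ω i ∂μ = Q i)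
    (hJunb : ∀ i j, ∫ ω, Jh ω i j ∂μ = J i j) (ω : Ω) (a : Fin n) :
    ((Jh ω - J)ᵀ *ᵥ (Qh' ω - Q) + (Jh' ω - J)ᵀ *ᵥ (Qh ω - Q)) a =
      ∑ i, symmErrorProd μ (fun ω => (Qh ω, Jh ω)) (fun ω => (Qh' ω, Jh' ω))
        (fun p => p.2 i a) (fun p => p.1 i) ω := by
  simp [symmErrorProd, mulVec, dotProduct, Finset.sum_add_distrib, hQunb, hJunb]

lemma memLp_symmError_apply [IsFiniteMeasure μ]
    (hindep : IndepFun (fun ω => (Qh ω, Jh ω)) (fun ω => (Qh' ω, Jh' ω)) μ)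
    (hid : IdentDistrib (fun ω => (Qh ω, Jh ω)) (fun ω => (Qh' ω, Jh' ω)) μ μ)
    (hQunb : ∀ i, ∫ ω, Qh ω i ∂μ = Q i) (hJunb : ∀ i j, ∫ ω, Jh ω i j ∂μ = J i j)
    (hQ2 : ∀ i, MemLp (fun ω => Qh ω i) 2 μ) (hJ2 : ∀ i j, MemLp (fun ω => Jh ω i j) 2 μ)
    (a : Fin n) :
    MemLp (fun ω => ((Jh ω - J)ᵀ *ᵥ (Qh' ω - Q) + (Jh' ω - J)ᵀ *ᵥ (Qh ω - Q)) a) 2 μ := by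
  simp_rw [symmError_apply_eq_sum hQunb hJunb]
  exact memLp_finsetSum _ fun i _ => memLp_symmErrorProd hindep hid (measurable_snd_apply i a)
    (measurable_fst_apply i) (hJ2 i a) (hQ2 i)

lemma vecVar_symmError_apply [IsProbabilityMeasure μ]
    (hindep : IndepFun (fun ω => (Qh ω, Jh ω)) (fun ω => (Qh' ω, Jh' ω)) μ)
    (hid : IdentDistrib (fun ω => (Qh ω, Jh ω)) (fun ω => (Qh' ω, Jh' ω)) μ μ)
    (hQunb : ∀ i, ∫ ω, Qh ω i ∂μ = Q i) (hJunb : ∀ i j, ∫ ω, Jh ω i j ∂μ = J i j)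
    (hQ2 : ∀ i, MemLp (fun ω => Qh ω i) 2 μ) (hJ2 : ∀ i j, MemLp (fun ω => Jh ω i j) 2 μ)
    (a b : Fin n) :
    vecVar μ (fun ω => (Jh ω - J)ᵀ *ᵥ (Qh' ω - Q) + (Jh' ω - J)ᵀ *ᵥ (Qh ω - Q)) a b =
      2 * ∑ i, ∑ j, (cov[fun ω => Jh ω i a, fun ω => Jh ω j b; μ] *
            cov[fun ω => Qh ω i, fun ω => Qh ω j; μ] +
          cov[fun ω => Jh ω i a, fun ω => Qh ω j; μ] *
            cov[fun ω => Qh ω i, fun ω => Jh ω j b; μ]) := by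
  have hS := fun i a => memLp_symmErrorProd hindep hid (measurable_snd_apply i a)
    (measurable_fst_apply i) (hJ2 i a) (hQ2 i)
  rw [vecVar_apply_eq_covariance (memLp_symmError_apply hindep hid hQunb hJunb hQ2 hJ2)]
  simp_rw [symmError_apply_eq_sum hQunb hJunb]
  rw [covariance_fun_sum_fun_sum (fun i => hS i a) (fun j => hS j b), Finset.mul_sum]
  refine Finset.sum_congr rfl fun i _ => ?_
  rw [Finset.mul_sum]
  refine Finset.sum_congr rfl fun j _ => ?_
  rw [covariance_symmErrorProd hindep hid (measurable_snd_apply i a) (measurable_snd_apply j b)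
    (measurable_fst_apply i) (measurable_fst_apply j) (hJ2 i a) (hJ2 j b) (hQ2 i) (hQ2 j)]
  rfl

lemma matMean_apply_eq_sum_covariance [IsProbabilityMeasure μ]
    (hindep : IndepFun (fun ω => (Qh ω, Jh ω)) (fun ω => (Qh' ω, Jh' ω)) μ)
    (hid : IdentDistrib (fun ω => (Qh ω, Jh ω)) (fun ω => (Qh' ω, Jh' ω)) μ μ)
    (hQunb : ∀ i, ∫ ω, Qh ω i ∂μ = Q i) (hJunb : ∀ i j, ∫ ω, Jh ω i j ∂μ = J i j)
    (hQ2 : ∀ i, MemLp (fun ω => Qh ω i) 2 μ) (hJ2 : ∀ i j, MemLp (fun ω => Jh ω i j) 2 μ)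
    (a b : Fin n) :
    matMean μ (fun ω =>
        (Jh ω)ᵀ * vecMulVec (Qh' ω) (Qh' ω) * Jh ω +
          (Jh ω)ᵀ * vecMulVec (Qh' ω) (Qh ω) * Jh' ω -
          Jᵀ * vecMulVec (Qh ω) (Qh ω) * J - Jᵀ * vecMulVec (Qh ω) Q * Jh ω -
          (Jh ω)ᵀ * vecMulVec Q (Qh ω) * J - (Jh ω)ᵀ * vecMulVec Q Q * Jh ω +
          (2 : ℝ) • (Jᵀ * vecMulVec Q Q * J)) a b =
      ∑ i, ∑ j, (cov[fun ω => Jh ω i a, fun ω => Jh ω j b; μ] *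
            cov[fun ω => Qh ω i, fun ω => Qh ω j; μ] +
          cov[fun ω => Jh ω i a, fun ω => Qh ω j; μ] *
            cov[fun ω => Qh ω i, fun ω => Jh ω j b; μ]) := by
  have hS := fun i j => integrable_estimatorSummand hindep hid (measurable_snd_apply i a)
    (measurable_snd_apply j b) (measurable_fst_apply i) (measurable_fst_apply j)
    (hJ2 i a) (hJ2 j b) (hQ2 i) (hQ2 j)
  calc _ = ∫ ω, ∑ i, ∑ j, estimatorSummand μ (fun ω => (Qh ω, Jh ω))
          (fun ω => (Qh' ω, Jh' ω)) (fun p => p.2 i a) (fun p => p.2 j b) (fun p => p.1 i)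
          (fun p => p.1 j) ω ∂μ := by
        refine integral_congr_ae (ae_of_all _ fun ω => ?_)
        simp only [Matrix.add_apply, Matrix.sub_apply, Matrix.smul_apply, smul_eq_mul,
          transpose_mul_vecMulVec_mul_apply, Finset.mul_sum, ← Finset.sum_sub_distrib,
          ← Finset.sum_add_distrib]
        refine Finset.sum_congr rfl fun i _ => Finset.sum_congr rfl fun j _ => ?_
        simp only [estimatorSummand, Function.comp_def, hQunb, hJunb]
        ring
    _ = _ := by
      rw [integral_finsetSum _ fun i _ => integrable_finsetSum _ fun j _ => hS i j]
      refine Finset.sum_congr rfl fun i _ => ?_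
      rw [integral_finsetSum _ fun j _ => hS i j]
      exact Finset.sum_congr rfl fun j _ => integral_estimatorSummand hindep hid
        (measurable_snd_apply i a) (measurable_snd_apply j b) (measurable_fst_apply i)
        (measurable_fst_apply j) (hJ2 i a) (hJ2 j b) (hQ2 i) (hQ2 j)

end PairedEstimators

theorem stmt3_general {Ω : Type*} [MeasurableSpace Ω] (μ : Measure Ω) [IsProbabilityMeasure μ]
    {m n : ℕ}
    (Qh Qh' : Ω → Fin m → ℝ) (Jh Jh' : Ω → Matrix (Fin m) (Fin n) ℝ)
    (Q : Fin m → ℝ) (J : Matrix (Fin m) (Fin n) ℝ)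
    (hindep : ProbabilityTheory.IndepFun (fun ω => (Qh ω, Jh ω))
      (fun ω => (Qh' ω, Jh' ω)) μ)
    (hid : ProbabilityTheory.IdentDistrib (fun ω => (Qh ω, Jh ω))
      (fun ω => (Qh' ω, Jh' ω)) μ μ)
    (hQunb : ∀ i, ∫ ω, Qh ω i ∂μ = Q i)
    (hJunb : ∀ i j, ∫ ω, Jh ω i j ∂μ = J i j)
    (hQ2 : ∀ i, MemLp (fun ω => Qh ω i) 2 μ)
    (hJ2 : ∀ i j, MemLp (fun ω => Jh ω i j) 2 μ) :
    matMean μ (fun ω =>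
        (Jh ω)ᵀ * vecMulVec (Qh' ω) (Qh' ω) * Jh ω +
          (Jh ω)ᵀ * vecMulVec (Qh' ω) (Qh ω) * Jh' ω -
          Jᵀ * vecMulVec (Qh ω) (Qh ω) * J - Jᵀ * vecMulVec (Qh ω) Q * Jh ω -
          (Jh ω)ᵀ * vecMulVec Q (Qh ω) * J - (Jh ω)ᵀ * vecMulVec Q Q * Jh ω +
          (2 : ℝ) • (Jᵀ * vecMulVec Q Q * J)) =
      (1 / 2 : ℝ) • vecVar μ (fun ω =>
        (Jh ω - J)ᵀ.mulVec (Qh' ω - Q) + (Jh' ω - J)ᵀ.mulVec (Qh ω - Q)) ∧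
    (matMean μ (fun ω =>
        (Jh ω)ᵀ * vecMulVec (Qh' ω) (Qh' ω) * Jh ω +
          (Jh ω)ᵀ * vecMulVec (Qh' ω) (Qh ω) * Jh' ω -
          Jᵀ * vecMulVec (Qh ω) (Qh ω) * J - Jᵀ * vecMulVec (Qh ω) Q * Jh ω -
          (Jh ω)ᵀ * vecMulVec Q (Qh ω) * J - (Jh ω)ᵀ * vecMulVec Q Q * Jh ω +
          (2 : ℝ) • (Jᵀ * vecMulVec Q Q * J))).PosSemidef := by
  have hPSD := (posSemidef_vecVar (memLp_symmError_apply hindep hid hQunb hJunb hQ2 hJ2)).smul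
    (show (0 : ℝ) ≤ 1 / 2 by norm_num)
  refine (fun key => ⟨key, key ▸ hPSD⟩) (Matrix.ext fun a b => ?_)
  rw [matMean_apply_eq_sum_covariance hindep hid hQunb hJunb hQ2 hJ2, Matrix.smul_apply,
    vecVar_symmError_apply hindep hid hQunb hJunb hQ2 hJ2, smul_eq_mul]
  ring

/-- for two i.i.d. pairs `(Q̂, Ĵ) ⊥ (Q̂′, Ĵ′)` of unbiased estimators of `Q`
and `J` with finite second moments, writing `ε_J = Ĵ − J` etc.,
`E[ĴᵀQ̂′Q̂′ᵀĴ + ĴᵀQ̂′Q̂ᵀĴ′ − JᵀQ̂Q̂ᵀJ − JᵀQ̂QᵀĴ − ĴᵀQQ̂ᵀJ − ĴᵀQQᵀĴ + 2JᵀQQᵀJ]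
  = (1/2)·Var[ε_Jᵀ ε_Q′ + ε_J′ᵀ ε_Q]`, which is in particular positive semidefinite. -/
theorem stmt3 {Ω : Type*} [MeasurableSpace Ω] (μ : Measure Ω) [IsProbabilityMeasure μ]
    {m n : ℕ}
    (Qh Qh' : Ω → Fin m → ℝ) (Jh Jh' : Ω → Matrix (Fin m) (Fin n) ℝ)
    (Q : Fin m → ℝ) (J : Matrix (Fin m) (Fin n) ℝ)
    (hmeas : Measurable fun ω => (Qh ω, Jh ω))
    (hmeas' : Measurable fun ω => (Qh' ω, Jh' ω))
    (hindep : ProbabilityTheory.IndepFun (fun ω => (Qh ω, Jh ω))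
      (fun ω => (Qh' ω, Jh' ω)) μ)
    (hid : ProbabilityTheory.IdentDistrib (fun ω => (Qh ω, Jh ω))
      (fun ω => (Qh' ω, Jh' ω)) μ μ)
    (hQunb : ∀ i, ∫ ω, Qh ω i ∂μ = Q i)
    (hJunb : ∀ i j, ∫ ω, Jh ω i j ∂μ = J i j)
    (hQ2 : ∀ i, MemLp (fun ω => Qh ω i) 2 μ)
    (hJ2 : ∀ i j, MemLp (fun ω => Jh ω i j) 2 μ)
    (hQ2' : ∀ i, MemLp (fun ω => Qh' ω i) 2 μ)
    (hJ2' : ∀ i j, MemLp (fun ω => Jh' ω i j) 2 μ) :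
    matMean μ (fun ω =>
        (Jh ω)ᵀ * vecMulVec (Qh' ω) (Qh' ω) * Jh ω +
          (Jh ω)ᵀ * vecMulVec (Qh' ω) (Qh ω) * Jh' ω -
          Jᵀ * vecMulVec (Qh ω) (Qh ω) * J - Jᵀ * vecMulVec (Qh ω) Q * Jh ω -
          (Jh ω)ᵀ * vecMulVec Q (Qh ω) * J - (Jh ω)ᵀ * vecMulVec Q Q * Jh ω +
          (2 : ℝ) • (Jᵀ * vecMulVec Q Q * J)) =
      (1 / 2 : ℝ) • vecVar μ (fun ω =>
        (Jh ω - J)ᵀ.mulVec (Qh' ω - Q) + (Jh' ω - J)ᵀ.mulVec (Qh ω - Q)) ∧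
    (matMean μ (fun ω =>
        (Jh ω)ᵀ * vecMulVec (Qh' ω) (Qh' ω) * Jh ω +
          (Jh ω)ᵀ * vecMulVec (Qh' ω) (Qh ω) * Jh' ω -
          Jᵀ * vecMulVec (Qh ω) (Qh ω) * J - Jᵀ * vecMulVec (Qh ω) Q * Jh ω -
          (Jh ω)ᵀ * vecMulVec Q (Qh ω) * J - (Jh ω)ᵀ * vecMulVec Q Q * Jh ω +
          (2 : ℝ) • (Jᵀ * vecMulVec Q Q * J))).PosSemidef :=
  stmt3_general μ Qh Qh' Jh Jh' Q J hindep hid hQunb hJunb hQ2 hJ2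
end
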